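/- Let B ≥ 2 and k ≥ 1 be integers, and for 0 ≤ w < B^k let φ(w) = ⟨a_0, ..., a_{k-1}⟩ be the base-B digits of w. Define R(w) = Σ_{i=0}^{k-1} ( B − 1 − a_i + 2 B^{k-i-1}(a_i + 1) ). Then R(w) = kB − k − (Σ_{i=0}^{k-1} a_i) + 2(Σ_{i=0}^{k-1} B^{k-i-1}) + 2w, and R is strictly increasing: for any 0 ≤ u < v < B^k, R(u) < R(v). -/

import Mathlib

/-!
Expanding the summand, `R(w)` is a constant minus the digit sum plus twice `Σ_i B^{k-i-1} a_i`,
and the latter is `w` itself. For monotonicity, `w ↦ w - s(w)` is monotone for the digit sum `s`: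
stripping the last digit, `u ≤ v` gives `u / B ≤ v / B`, and by induction the higher digits'
sum grows by at most `v / B - u / B`, while their contribution to the value grows by `B` times that.
-/

namespace Paper

/-- The `i`-th base-`B` digit (most significant first) of the `k`-digit representation of `w`. -/
def digit (B k w i : ℕ) : ℕ := w / B ^ (k - 1 - i) % B

/-- `R(w) = Σ_{i<k} (B − 1 − φ(w)_i + 2 B^{k-i-1}(φ(w)_i + 1))`, the distance from `c_w` to
`t` through the layered gadget. -/
def Rfun (B k w : ℕ) : ℤ :=
  ∑ i ∈ Finset.range k,
    ((B : ℤ) - 1 - (digit B k w i : ℤ) + 2 * (B : ℤ) ^ (k - i - 1) * ((digit B k w i : ℤ) + 1))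

open Finset

def digitSum (B k w : ℕ) : ℕ := ∑ j ∈ range k, w / B ^ j % B

lemma sum_range_div_pow_mod_mul_pow (B k w : ℕ) :
    ∑ j ∈ range k, w / B ^ j % B * B ^ j = w % B ^ k := by
  induction k with
  | zero => simp [Nat.mod_one]
  | succ k ih =>
    rw [sum_range_succ, ih, Nat.mod_pow_succ]
    ring

lemma sum_range_pow_mul_digit {B k w : ℕ} (hw : w < B ^ k) :
    ∑ i ∈ range k, B ^ (k - i - 1) * digit B k w i = w := by
  conv_rhs => rw [← Nat.mod_eq_of_lt hw, ← sum_range_div_pow_mod_mul_pow]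
  rw [← sum_range_reflect]
  refine sum_congr rfl fun i hi => ?_
  have hi : i < k := mem_range.mp hi
  rw [digit, mul_comm, show k - (k - 1 - i) - 1 = i by omega, show k - 1 - (k - 1 - i) = i by omega]

lemma sum_range_digit (B k w : ℕ) : ∑ i ∈ range k, digit B k w i = digitSum B k w :=
  sum_range_reflect (fun j => w / B ^ j % B) k

lemma digitSum_succ (B k w : ℕ) : digitSum B (k + 1) w = w % B + digitSum B k (w / B) := by
  simp only [digitSum, sum_range_succ', pow_zero, Nat.div_one, pow_succ', Nat.div_div_eq_div_mul,
    add_comm]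

lemma digitSum_add_le_digitSum_add (B k : ℕ) {u v : ℕ} (huv : u ≤ v) :
    digitSum B k v + u ≤ digitSum B k u + v := by
  induction k generalizing u v with
  | zero => simpa [digitSum] using huv
  | succ k ih =>
    rcases B.eq_zero_or_pos with rfl | hB
    · simp only [digitSum_succ, Nat.div_zero, Nat.mod_zero]
      omega
    have hq : u / B ≤ v / B := Nat.div_le_div_right huv
    have hhigh := ih hq
    have hloss : v / B - u / B ≤ B * (v / B - u / B) := Nat.le_mul_of_pos_left _ hB
    rw [digitSum_succ, digitSum_succ]
    have := Nat.div_add_mod u B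
    have := Nat.div_add_mod v B
    have : B * (v / B - u / B) = B * (v / B) - B * (u / B) := Nat.mul_sub B _ _
    have : B * (u / B) ≤ B * (v / B) := Nat.mul_le_mul_left B hq
    omega

lemma Rfun_eq {B k w : ℕ} (hw : w < B ^ k) :
    Rfun B k w = (k : ℤ) * B - k - (∑ i ∈ range k, (digit B k w i : ℤ))
      + 2 * (∑ i ∈ range k, (B : ℤ) ^ (k - i - 1)) + 2 * (w : ℤ) := by
  have hw' : ∑ i ∈ range k, (B : ℤ) ^ (k - i - 1) * digit B k w i = w := by
    exact_mod_cast sum_range_pow_mul_digit hw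
  have hsummand : ∀ i ∈ range k,
      (B : ℤ) - 1 - digit B k w i + 2 * (B : ℤ) ^ (k - i - 1) * (digit B k w i + 1)
        = (B : ℤ) - 1 - digit B k w i + 2 * (B : ℤ) ^ (k - i - 1)
          + 2 * ((B : ℤ) ^ (k - i - 1) * digit B k w i) := fun i _ => by ring
  rw [Rfun, sum_congr rfl hsummand]
  simp only [sum_add_distrib, sum_sub_distrib, sum_const, card_range, ← mul_sum, hw']
  ring

theorem gadget_target_distance_formula_general (B k : ℕ) :
    (∀ w < B ^ k,
      Rfun B k w = (k : ℤ) * B - k - (∑ i ∈ Finset.range k, (digit B k w i : ℤ))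
        + 2 * (∑ i ∈ Finset.range k, (B : ℤ) ^ (k - i - 1)) + 2 * (w : ℤ)) ∧
    (∀ u v : ℕ, u < v → v < B ^ k → Rfun B k u < Rfun B k v) := by
  refine ⟨fun w hw => Rfun_eq hw, fun u v huv hv => ?_⟩
  rw [Rfun_eq (huv.trans hv), Rfun_eq hv]
  have hdigits : ∀ w, ∑ i ∈ range k, (digit B k w i : ℤ) = digitSum B k w := fun w => by
    exact_mod_cast sum_range_digit B k w
  have hmono : (digitSum B k v : ℤ) + u ≤ digitSum B k u + v := by
    exact_mod_cast digitSum_add_le_digitSum_add B k huv.le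
  rw [hdigits, hdigits]
  have : (u : ℤ) < v := by exact_mod_cast huv
  linarith

/-- `R(w) = kB − k − Σ_i φ(w)_i + 2 Σ_i B^{k-i-1} + 2w`, and `R` is strictly
increasing on `[0, B^k)`. -/
theorem gadget_target_distance_formula (B k : ℕ) (hB : 2 ≤ B) (hk : 1 ≤ k) :
    (∀ w < B ^ k,
      Rfun B k w = (k : ℤ) * B - k - (∑ i ∈ Finset.range k, (digit B k w i : ℤ))
        + 2 * (∑ i ∈ Finset.range k, (B : ℤ) ^ (k - i - 1)) + 2 * (w : ℤ)) ∧
    (∀ u v : ℕ, u < v → v < B ^ k → Rfun B k u < Rfun B k v) :=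
  gadget_target_distance_formula_general B k

end Paper
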